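/- Let L > 0, let κ₀ : ℝ/Lℤ → ℝ be a continuously differentiable L-periodic function with ∫₀^L κ₀ dσ = 2π, and let Φ : ℝ → ℝ be continuous. Suppose u : (ℝ/Lℤ) × [0,T] → ℝ is a classical solution (C² in σ, C¹ in t) of ((1−uκ₀)/S(u))·u_t − Φ(((1−uκ₀)/S(u))·u_t) = κ(u) − (1/∫₀^L S(u) dσ)·(∫₀^L Φ(((1−uκ₀)/S(u))·u_t)·S(u) dσ + 2π) with sup_{σ,t}|u·κ₀| < 1. Then ∫₀^L (1 − u(σ,t)κ₀(σ))·u_t(σ,t) dσ = 0 for every t ∈ [0,T]; equivalently, the weighted area t ↦ ∫₀^L (u(σ,t) − κ₀(σ)u(σ,t)²/2) dσ is constant in time. -/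

import Mathlib

open Set MeasureTheory

noncomputable section

/-- Partial derivative in the first (space) variable `σ`. -/
def pdσ (u : ℝ → ℝ → ℝ) (σ t : ℝ) : ℝ := deriv (fun s => u s t) σ

/-- Partial derivative in the second (time) variable `t`. -/
def pdt (u : ℝ → ℝ → ℝ) (σ t : ℝ) : ℝ := deriv (fun τ => u σ τ) t

/-- The arc-length element `S(u) = √(u_σ² + (1 - u·κ0)²)`. -/
def arcEl (κ0 : ℝ → ℝ) (u : ℝ → ℝ → ℝ) (σ t : ℝ) : ℝ :=
  Real.sqrt ((pdσ u σ t)^2 + (1 - u σ t * κ0 σ)^2)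

/-- The signed curvature `κ(u)` of the normal graph `u(·,t)`. -/
def curvOf (κ0 : ℝ → ℝ) (u : ℝ → ℝ → ℝ) (σ t : ℝ) : ℝ :=
  ((1 - u σ t * κ0 σ) * pdσ (pdσ u) σ t + 2 * κ0 σ * (pdσ u σ t)^2
      + deriv κ0 σ * pdσ u σ t * u σ t + κ0 σ * (1 - u σ t * κ0 σ)^2)
    / (arcEl κ0 u σ t)^3

/-- The inward normal velocity `V(u) = ((1-uκ0)/S(u))·u_t`. -/
def nVel (κ0 : ℝ → ℝ) (u : ℝ → ℝ → ℝ) (σ t : ℝ) : ℝ :=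
  (1 - u σ t * κ0 σ) / arcEl κ0 u σ t * pdt u σ t

/-- The sharp-interface-limit evolution equation in normal-graph form at `(σ, t)`:
`V(u) - Φ(V(u)) = κ(u) - (∫₀ᴸ S(u))⁻¹·(∫₀ᴸ Φ(V(u))·S(u) + 2π)`. -/
def EvolEq (L : ℝ) (κ0 Φ : ℝ → ℝ) (u : ℝ → ℝ → ℝ) (σ t : ℝ) : Prop :=
  nVel κ0 u σ t - Φ (nVel κ0 u σ t) =
    curvOf κ0 u σ t - (∫ x in (0:ℝ)..L, arcEl κ0 u x t)⁻¹ *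
      ((∫ x in (0:ℝ)..L, Φ (nVel κ0 u x t) * arcEl κ0 u x t) + 2 * Real.pi)

theorem Function.Periodic.deriv {f : ℝ → ℝ} {L : ℝ} (h : Function.Periodic f L) :
    Function.Periodic (deriv f) L := fun x => by
  rw [← deriv_comp_add_const, funext h]

/-- The bound on the derivative makes `u` Lipschitz in `t` uniformly in `σ`. -/
theorem continuousOn_uncurry_of_hasDerivWithinAt {u v : ℝ → ℝ → ℝ} {s t : Set ℝ}
    (hs : IsCompact s) (ht : IsCompact t) (ht' : Convex ℝ t)
    (hv : ContinuousOn (Function.uncurry v) (s ×ˢ t))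
    (hu : ∀ τ ∈ t, ContinuousOn (u · τ) s)
    (hderiv : ∀ σ ∈ s, ∀ τ ∈ t, HasDerivWithinAt (u σ) (v σ τ) t τ) :
    ContinuousOn (Function.uncurry u) (s ×ˢ t) := by
  obtain ⟨C, hC⟩ := (hs.prod ht).exists_bound_of_continuousOn hv
  refine continuousOn_prod_of_continuousOn_lipschitzOnWith' (Function.uncurry u) C.toNNReal
    (fun σ hσ => ht'.lipschitzOnWith_of_nnnorm_hasDerivWithin_le (hderiv σ hσ) fun τ hτ => ?_) hu
  rw [← NNReal.coe_le_coe, coe_nnnorm]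
  exact (hC (σ, τ) ⟨hσ, hτ⟩).trans (Real.le_coe_toNNReal C)

theorem intervalIntegral_eq_of_integral_deriv_eq_zero {F f : ℝ → ℝ → ℝ} {a b t₁ t₂ : ℝ}
    (hab : a ≤ b) (ht : t₁ ≤ t₂)
    (hf : ContinuousOn (Function.uncurry f) (Icc a b ×ˢ Icc t₁ t₂))
    (hF : ∀ σ ∈ Icc a b, ∀ τ ∈ Icc t₁ t₂, HasDerivAt (F σ) (f σ τ) τ)
    (hF₁ : IntervalIntegrable (F · t₁) volume a b)
    (hF₂ : IntervalIntegrable (F · t₂) volume a b)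
    (hzero : ∀ τ ∈ Icc t₁ t₂, ∫ σ in a..b, f σ τ = 0) :
    ∫ σ in a..b, F σ t₂ = ∫ σ in a..b, F σ t₁ := by
  have hint : Integrable (Function.uncurry f)
      ((volume.restrict (Ioc a b)).prod (volume.restrict (Ioc t₁ t₂))) := by
    rw [Measure.prod_restrict, ← Measure.volume_eq_prod]
    exact (hf.integrableOn_compact (isCompact_Icc.prod isCompact_Icc)).mono_set
      (prod_mono Ioc_subset_Icc_self Ioc_subset_Icc_self)
  have hFTC : ∀ σ ∈ Ioc a b, F σ t₂ - F σ t₁ = ∫ τ in Ioc t₁ t₂, f σ τ := by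
    intro σ hσ
    have hσ' := Ioc_subset_Icc_self hσ
    have hfσ : ContinuousOn (f σ) (Icc t₁ t₂) :=
      hf.comp (continuousOn_const.prodMk continuousOn_id) fun τ hτ => ⟨hσ', hτ⟩
    rw [← intervalIntegral.integral_of_le ht]
    refine (intervalIntegral.integral_eq_sub_of_hasDerivAt (fun τ hτ => ?_)
      (hfσ.intervalIntegrable_of_Icc ht)).symm
    exact hF σ hσ' τ (uIcc_of_le ht ▸ hτ)
  rw [← sub_eq_zero, ← intervalIntegral.integral_sub hF₂ hF₁,
    intervalIntegral.integral_of_le hab, setIntegral_congr_fun measurableSet_Ioc hFTC,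
    integral_integral_swap hint]
  refine setIntegral_eq_zero_of_forall_eq_zero fun τ hτ => ?_
  rw [← intervalIntegral.integral_of_le hab]
  exact hzero τ (Ioc_subset_Icc_self hτ)

section NormalGraph

variable {κ0 : ℝ → ℝ} {u : ℝ → ℝ → ℝ} {σ t : ℝ}

theorem arcEl_pos (hb : 0 < 1 - u σ t * κ0 σ) : 0 < arcEl κ0 u σ t :=
  Real.sqrt_pos.mpr (by positivity)

theorem arcEl_sq : arcEl κ0 u σ t ^ 2 = pdσ u σ t ^ 2 + (1 - u σ t * κ0 σ) ^ 2 :=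
  Real.sq_sqrt (by positivity)

theorem nVel_mul_arcEl (hb : 0 < 1 - u σ t * κ0 σ) :
    nVel κ0 u σ t * arcEl κ0 u σ t = (1 - u σ t * κ0 σ) * pdt u σ t := by
  have := (arcEl_pos hb).ne'
  unfold nVel
  field_simp

theorem continuous_arcEl (hu : ContDiff ℝ 1 (u · t)) (hκ : Continuous κ0) :
    Continuous (arcEl κ0 u · t) := by
  have hu' : Continuous (pdσ u · t) := hu.continuous_deriv le_rfl
  have hu : Continuous (u · t) := hu.continuous
  unfold arcEl
  fun_prop

theorem continuous_curvOf (hu : ContDiff ℝ 2 (u · t)) (hκ : ContDiff ℝ 1 κ0)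
    (hb : ∀ σ, 0 < 1 - u σ t * κ0 σ) : Continuous (curvOf κ0 u · t) := by
  have hS := continuous_arcEl (hu.of_le one_le_two) hκ.continuous
  have hu₁ : ContDiff ℝ 1 (pdσ u · t) := hu.deriv' (n := 1)
  have hu' : Continuous (pdσ u · t) := hu₁.continuous
  have hu'' : Continuous (pdσ (pdσ u) · t) := hu₁.continuous_deriv_one
  have hu : Continuous (u · t) := hu.continuous
  have hκ' : Continuous (deriv κ0) := hκ.continuous_deriv_one
  have hκ : Continuous κ0 := hκ.continuous
  exact Continuous.div (by fun_prop) (by fun_prop) fun σ => pow_ne_zero 3 (arcEl_pos (hb σ)).ne'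

/-- `arctan (u_σ / (1 - u κ0))` is the angle between the tangent of the curve and that of the
reference curve, so its derivative is the curvature change `κ(u) S(u) - κ0`. -/
theorem hasDerivAt_arctan_slope (hu : ContDiff ℝ 2 (u · t)) (hκ : Differentiable ℝ κ0)
    (hb : 0 < 1 - u σ t * κ0 σ) :
    HasDerivAt (fun s => Real.arctan (pdσ u s t / (1 - u s t * κ0 s)))
      (curvOf κ0 u σ t * arcEl κ0 u σ t - κ0 σ) σ := by
  have hu₀ : HasDerivAt (u · t) (pdσ u σ t) σ :=
    ((hu.differentiable two_ne_zero) σ).hasDerivAt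
  have hu₁ : HasDerivAt (pdσ u · t) (pdσ (pdσ u) σ t) σ :=
    (((hu.deriv' (n := 1)).differentiable one_ne_zero) σ).hasDerivAt
  have hb' := (hu₀.mul (hκ σ).hasDerivAt).const_sub 1
  refine ((Real.hasDerivAt_arctan _).comp σ (hu₁.div hb' hb.ne')).congr_deriv ?_
  have hS : arcEl κ0 u σ t ^ 3 = arcEl κ0 u σ t * (pdσ u σ t ^ 2 + (1 - u σ t * κ0 σ) ^ 2) := by
    rw [← arcEl_sq]; ring
  have : pdσ u σ t ^ 2 + (1 - u σ t * κ0 σ) ^ 2 ≠ 0 := by positivity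
  have := (arcEl_pos hb).ne'
  simp only [Pi.div_apply, Pi.mul_apply]
  rw [curvOf, hS]
  field_simp
  ring

theorem integral_curvOf_mul_arcEl {L : ℝ} (hu : ContDiff ℝ 2 (u · t))
    (hper : Function.Periodic (u · t) L) (hκ : ContDiff ℝ 1 κ0) (hκper : Function.Periodic κ0 L)
    (hκint : ∫ σ in (0:ℝ)..L, κ0 σ = 2 * Real.pi) (hb : ∀ σ, 0 < 1 - u σ t * κ0 σ) :
    ∫ σ in (0:ℝ)..L, curvOf κ0 u σ t * arcEl κ0 u σ t = 2 * Real.pi := by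
  have hκS : Continuous (fun σ => curvOf κ0 u σ t * arcEl κ0 u σ t) :=
    (continuous_curvOf hu hκ hb).mul (continuous_arcEl (hu.of_le one_le_two) hκ.continuous)
  have hFTC := intervalIntegral.integral_eq_sub_of_hasDerivAt
    (fun σ _ => hasDerivAt_arctan_slope hu (hκ.differentiable one_ne_zero) (hb σ))
    ((hκS.sub hκ.continuous).intervalIntegrable 0 L)
  have hu' : pdσ u L t = pdσ u 0 t := by simpa [pdσ] using hper.deriv 0
  have hu : u L t = u 0 t := by simpa using hper 0
  have hκ0 : κ0 L = κ0 0 := by simpa using hκper 0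
  rw [hu', hu, hκ0, sub_self, intervalIntegral.integral_sub (hκS.intervalIntegrable 0 L)
    (hκ.continuous.intervalIntegrable 0 L), hκint, sub_eq_zero] at hFTC
  exact hFTC

theorem hasDerivAt_weightedArea (hu : DifferentiableAt ℝ (u σ) t) :
    HasDerivAt (fun τ => u σ τ - κ0 σ * u σ τ ^ 2 / 2) ((1 - u σ t * κ0 σ) * pdt u σ t) t := by
  refine (hu.hasDerivAt.sub (((hu.hasDerivAt.pow 2).const_mul (κ0 σ)).div_const 2)).congr_deriv ?_
  unfold pdt
  push_cast
  ring

end NormalGraph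

/-- The Lagrange multiplier `λ(t)` of the evolution equation `V = Φ(V) + κ - λ(t)`. -/
def lagrangeMult (L : ℝ) (κ0 Φ : ℝ → ℝ) (u : ℝ → ℝ → ℝ) (t : ℝ) : ℝ :=
  (∫ x in (0:ℝ)..L, arcEl κ0 u x t)⁻¹ *
    ((∫ x in (0:ℝ)..L, Φ (nVel κ0 u x t) * arcEl κ0 u x t) + 2 * Real.pi)

theorem evolEq_iff {L : ℝ} {κ0 Φ : ℝ → ℝ} {u : ℝ → ℝ → ℝ} {σ t : ℝ} :
    EvolEq L κ0 Φ u σ t ↔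
      nVel κ0 u σ t = Φ (nVel κ0 u σ t) + curvOf κ0 u σ t - lagrangeMult L κ0 Φ u t := by
  rw [EvolEq, lagrangeMult]
  constructor <;> intro h <;> linarith

theorem integral_one_sub_mul_pdt_eq_zero {L t : ℝ} {κ0 Φ : ℝ → ℝ} {u : ℝ → ℝ → ℝ}
    (hL : 0 < L) (hκ : ContDiff ℝ 1 κ0) (hκper : Function.Periodic κ0 L)
    (hκint : ∫ σ in (0:ℝ)..L, κ0 σ = 2 * Real.pi) (hΦ : Continuous Φ)
    (hper : Function.Periodic (u · t) L) (hu : ContDiff ℝ 2 (u · t))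
    (hut : Continuous (pdt u · t)) (hb : ∀ σ, 0 < 1 - u σ t * κ0 σ)
    (heqn : ∀ σ, EvolEq L κ0 Φ u σ t) :
    ∫ σ in (0:ℝ)..L, (1 - u σ t * κ0 σ) * pdt u σ t = 0 := by
  have hS := continuous_arcEl (hu.of_le one_le_two) hκ.continuous
  have hV : Continuous (nVel κ0 u · t) := by
    have hu : Continuous (u · t) := hu.continuous
    have hκ : Continuous κ0 := hκ.continuous
    exact (Continuous.div (by fun_prop) hS fun σ => (arcEl_pos (hb σ)).ne').mul hut
  have hpt : ∀ σ, (1 - u σ t * κ0 σ) * pdt u σ t = Φ (nVel κ0 u σ t) * arcEl κ0 u σ t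
      + curvOf κ0 u σ t * arcEl κ0 u σ t - lagrangeMult L κ0 Φ u t * arcEl κ0 u σ t :=
    fun σ => by
      rw [← nVel_mul_arcEl (hb σ)]
      linear_combination arcEl κ0 u σ t * evolEq_iff.mp (heqn σ)
  have hSint : 0 < ∫ σ in (0:ℝ)..L, arcEl κ0 u σ t :=
    intervalIntegral.intervalIntegral_pos_of_pos (hS.intervalIntegrable 0 L)
      (fun σ => arcEl_pos (hb σ)) hL
  have hΦS : IntervalIntegrable (fun σ => Φ (nVel κ0 u σ t) * arcEl κ0 u σ t) volume 0 L :=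
    ((hΦ.comp hV).mul hS).intervalIntegrable 0 L
  have hκS : IntervalIntegrable (fun σ => curvOf κ0 u σ t * arcEl κ0 u σ t) volume 0 L :=
    ((continuous_curvOf hu hκ hb).mul hS).intervalIntegrable 0 L
  rw [intervalIntegral.integral_congr fun σ _ => hpt σ, intervalIntegral.integral_sub
      (hΦS.add hκS) ((hS.intervalIntegrable 0 L).const_mul _),
    intervalIntegral.integral_add hΦS hκS, intervalIntegral.integral_const_mul,
    integral_curvOf_mul_arcEl hu hper hκ hκper hκint hb, lagrangeMult]
  field_simp
  ring

theorem stmt_4_general (L T : ℝ) (hL : 0 < L)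
    (κ0 Φ : ℝ → ℝ) (u : ℝ → ℝ → ℝ)
    (hκreg : ContDiff ℝ 1 κ0) (hκper : Function.Periodic κ0 L)
    (hκint : (∫ σ in (0:ℝ)..L, κ0 σ) = 2 * Real.pi)
    (hΦ : Continuous Φ)
    (hper : ∀ t ∈ Icc (0:ℝ) T, Function.Periodic (fun σ => u σ t) L)
    (hregσ : ∀ t ∈ Icc (0:ℝ) T, ContDiff ℝ 2 (fun σ => u σ t))
    (hregt : ∀ σ, ∀ t ∈ Icc (0:ℝ) T, DifferentiableAt ℝ (fun τ => u σ τ) t)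
    (hut_cont : ContinuousOn (fun p : ℝ × ℝ => pdt u p.1 p.2) (univ ×ˢ Icc (0:ℝ) T))
    (hsmall : ∃ c < (1:ℝ), ∀ σ, ∀ t ∈ Icc (0:ℝ) T, |u σ t * κ0 σ| ≤ c)
    (heqn : ∀ σ, ∀ t ∈ Icc (0:ℝ) T, EvolEq L κ0 Φ u σ t) :
    (∀ t ∈ Icc (0:ℝ) T, (∫ σ in (0:ℝ)..L, (1 - u σ t * κ0 σ) * pdt u σ t) = 0) ∧
    (∀ t1 ∈ Icc (0:ℝ) T, ∀ t2 ∈ Icc (0:ℝ) T,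
      (∫ σ in (0:ℝ)..L, (u σ t1 - κ0 σ * (u σ t1)^2 / 2)) =
      (∫ σ in (0:ℝ)..L, (u σ t2 - κ0 σ * (u σ t2)^2 / 2))) := by
  obtain ⟨c, hc1, hc⟩ := hsmall
  have hb : ∀ t ∈ Icc (0:ℝ) T, ∀ σ, 0 < 1 - u σ t * κ0 σ := fun t ht σ => by
    linarith [(abs_le.mp (hc σ t ht)).2]
  have hvel : ∀ t ∈ Icc (0:ℝ) T, ∫ σ in (0:ℝ)..L, (1 - u σ t * κ0 σ) * pdt u σ t = 0 :=
    fun t ht => integral_one_sub_mul_pdt_eq_zero hL hκreg hκper hκint hΦ (hper t ht) (hregσ t ht)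
      (hut_cont.comp_continuous (continuous_id.prodMk continuous_const) fun _ => ⟨trivial, ht⟩)
      (hb t ht) fun σ => heqn σ t ht
  refine ⟨hvel, fun t₁ ht₁ t₂ ht₂ => ?_⟩
  wlog h12 : t₁ ≤ t₂ generalizing t₁ t₂
  · exact (this t₂ ht₂ t₁ ht₁ (le_of_not_ge h12)).symm
  have hsub : Icc t₁ t₂ ⊆ Icc 0 T := Icc_subset_Icc ht₁.1 ht₂.2
  have hut : ContinuousOn (Function.uncurry (pdt u)) (Icc 0 L ×ˢ Icc t₁ t₂) :=
    hut_cont.mono (prod_mono (subset_univ _) hsub)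
  have hu : ContinuousOn (Function.uncurry u) (Icc 0 L ×ˢ Icc t₁ t₂) :=
    continuousOn_uncurry_of_hasDerivWithinAt isCompact_Icc isCompact_Icc (convex_Icc _ _) hut
      (fun τ hτ => (hregσ τ (hsub hτ)).continuous.continuousOn)
      fun σ _ τ hτ => (hregt σ τ (hsub hτ)).hasDerivAt.hasDerivWithinAt
  have harea : ∀ t ∈ Icc (0:ℝ) T,
      IntervalIntegrable (fun σ => u σ t - κ0 σ * u σ t ^ 2 / 2) volume 0 L := fun t ht => by
    have hu : Continuous (u · t) := (hregσ t ht).continuous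
    have hκ : Continuous κ0 := hκreg.continuous
    exact Continuous.intervalIntegrable (by fun_prop) 0 L
  refine (intervalIntegral_eq_of_integral_deriv_eq_zero
    (F := fun σ τ => u σ τ - κ0 σ * u σ τ ^ 2 / 2) (f := fun σ τ => (1 - u σ τ * κ0 σ) * pdt u σ τ)
    hL.le h12 ?_ (fun σ _ τ hτ => hasDerivAt_weightedArea (hregt σ τ (hsub hτ)))
    (harea t₁ ht₁) (harea t₂ ht₂) fun τ hτ => hvel τ (hsub hτ)).symm
  exact (continuousOn_const.sub
    (hu.mul (hκreg.continuous.comp continuous_fst).continuousOn)).mul hut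

/-- for a classical solution (C² in σ, C¹ in t) of the sharp interface
limit equation over a C¹ reference curve of length `L` with total curvature `2π`, and
with `sup|u·κ0| < 1`, one has `∫₀ᴸ (1 - uκ0)·u_t dσ = 0` for all `t ∈ [0,T]`;
equivalently, the weighted area `t ↦ ∫₀ᴸ (u - κ0·u²/2) dσ` is constant in time. -/
theorem stmt_4 (L T : ℝ) (hL : 0 < L) (hT : 0 < T)
    (κ0 Φ : ℝ → ℝ) (u : ℝ → ℝ → ℝ)
    (hκreg : ContDiff ℝ 1 κ0) (hκper : Function.Periodic κ0 L)
    (hκint : (∫ σ in (0:ℝ)..L, κ0 σ) = 2 * Real.pi)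
    (hΦ : Continuous Φ)
    (hper : ∀ t ∈ Icc (0:ℝ) T, Function.Periodic (fun σ => u σ t) L)
    (hregσ : ∀ t ∈ Icc (0:ℝ) T, ContDiff ℝ 2 (fun σ => u σ t))
    (hregt : ∀ σ, ∀ t ∈ Icc (0:ℝ) T, DifferentiableAt ℝ (fun τ => u σ τ) t)
    (hut_cont : ContinuousOn (fun p : ℝ × ℝ => pdt u p.1 p.2) (univ ×ˢ Icc (0:ℝ) T))
    (hsmall : ∃ c < (1:ℝ), ∀ σ, ∀ t ∈ Icc (0:ℝ) T, |u σ t * κ0 σ| ≤ c)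
    (heqn : ∀ σ, ∀ t ∈ Icc (0:ℝ) T, EvolEq L κ0 Φ u σ t) :
    (∀ t ∈ Icc (0:ℝ) T, (∫ σ in (0:ℝ)..L, (1 - u σ t * κ0 σ) * pdt u σ t) = 0) ∧
    (∀ t1 ∈ Icc (0:ℝ) T, ∀ t2 ∈ Icc (0:ℝ) T,
      (∫ σ in (0:ℝ)..L, (u σ t1 - κ0 σ * (u σ t1)^2 / 2)) =
      (∫ σ in (0:ℝ)..L, (u σ t2 - κ0 σ * (u σ t2)^2 / 2))) :=
  stmt_4_general L T hL κ0 Φ u hκreg hκper hκint hΦ hper hregσ hregt hut_cont hsmall heqn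

end
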